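/- Let α > 0, let θ be a quaternion with ‖θ‖ = 1, let N ∈ ℕ, and let c_0,…,c_N, d_0,…,d_N ∈ ℍ. Define f(x) = ∑_{n=0}^N φ_n^{α}(x)·c_n, h(x) = ∑_{n=0}^N φ_n^{α}(x)·d_n, and their fractional transforms g_f(x) = ∑_{n=0}^N φ_n^{α}(x)·θ^n·c_n, g_h(x) = ∑_{n=0}^N φ_n^{α}(x)·θ^n·d_n. Then the quaternionic scalar products agree: ∫₀^∞ star(g_f(x))·g_h(x) x^α e^{-x} dx = ∫₀^∞ star(f(x))·h(x) x^α e^{-x} dx. -/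

import Mathlib

/-!
Expanding `L_n^{(α)}` and integrating term by term against the Gamma integral, the moment
`∫ x^k L_m^{(α)}(x) x^α e^{-x} dx` becomes, up to the factor `(-1)^m Γ(m+α+1)/m!`, the `m`-th
forward difference at `0` of the polynomial `l ↦ Γ(l+α+1+k)/Γ(l+α+1)` of degree `k`. It
therefore vanishes for `k < m` and is explicit for `k = m`, which makes the `φ_n^{α}`
orthonormal. Since the `φ_n^{α}` are real, orthonormality reduces both scalar products to
coefficient sums, and `star (θ^n c) (θ^n d) = star c d` because `θ^n` is a unit quaternion.
-/

open MeasureTheory Set Quaternion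

/-- Generalized Laguerre polynomial `L_n^{(α)}(x)`. -/
noncomputable def lagPoly (α : ℝ) (n : ℕ) (x : ℝ) : ℝ :=
  ∑ k ∈ Finset.range (n + 1),
    (-1 : ℝ) ^ k / ((Nat.factorial k : ℝ) * (Nat.factorial (n - k) : ℝ)) *
      (Real.Gamma (n + α + 1) / Real.Gamma (k + α + 1)) * x ^ k

/-- Normalized Laguerre function `φ_n^{α}(x)`. -/
noncomputable def lagFun (α : ℝ) (n : ℕ) (x : ℝ) : ℝ :=
  Real.sqrt ((Nat.factorial n : ℝ) / Real.Gamma (α + n + 1)) * lagPoly α n x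

open Finset Polynomial fwdDiff
open scoped Nat

lemma Real.Gamma_add_nat_eq_mul_ascPochhammer {z : ℝ} (hz : 0 < z) (n : ℕ) :
    Real.Gamma (z + n) = Real.Gamma z * (ascPochhammer ℝ n).eval z := by
  induction n with
  | zero => simp
  | succ n ih =>
    rw [Nat.cast_succ, ← add_assoc, Real.Gamma_add_one (by positivity), ih,
      ascPochhammer_succ_eval]
    ring

lemma sum_neg_one_pow_mul_choose_mul_eval {R : Type*} [CommRing R] (P : R[X]) (m : ℕ) :
    ∑ l ∈ range (m + 1), (-1 : R) ^ l * m.choose l * P.eval (l : R) =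
      (-1) ^ m * Δ_[1] ^[m] P.eval 0 := by
  rw [fwdDiff_iter_eq_sum_shift, mul_sum]
  refine sum_congr rfl fun l hl => ?_
  obtain ⟨j, rfl⟩ := Nat.exists_eq_add_of_le (Nat.lt_succ_iff.mp (mem_range.mp hl))
  have hsign : (-1 : R) ^ l = (-1) ^ (l + j) * (-1) ^ j := by
    rw [pow_add, mul_assoc, ← mul_pow]
    simp
  simp only [Nat.add_sub_cancel_left, hsign, zero_add, nsmul_one, zsmul_eq_mul]
  push_cast
  ring

section Laguerre

variable {α : ℝ}

lemma natCast_add_add_one_pos (hα : -1 < α) (k : ℕ) : 0 < (k : ℝ) + α + 1 := by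
  linarith [(k.cast_nonneg : (0 : ℝ) ≤ k)]

lemma rpow_mul_exp_neg_mul_pow {x : ℝ} (hx : 0 < x) (k : ℕ) :
    x ^ α * Real.exp (-x) * x ^ k = Real.exp (-x) * x ^ ((k : ℝ) + α + 1 - 1) := by
  rw [add_sub_cancel_right, Real.rpow_add hx, Real.rpow_natCast]
  ring

lemma integrableOn_weight_mul_pow (hα : -1 < α) (k : ℕ) :
    IntegrableOn (fun x : ℝ => x ^ α * Real.exp (-x) * x ^ k) (Ioi 0) :=
  (Real.GammaIntegral_convergent (natCast_add_add_one_pos hα k)).congr_fun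
    (fun _ hx => (rpow_mul_exp_neg_mul_pow hx k).symm) measurableSet_Ioi

lemma integral_weight_mul_pow (hα : -1 < α) (k : ℕ) :
    ∫ x in Ioi (0 : ℝ), x ^ α * Real.exp (-x) * x ^ k = Real.Gamma (k + α + 1) := by
  rw [Real.Gamma_eq_integral (natCast_add_add_one_pos hα k)]
  exact setIntegral_congr_fun measurableSet_Ioi fun _ hx => rpow_mul_exp_neg_mul_pow hx k

noncomputable def lagCoeff (α : ℝ) (n k : ℕ) : ℝ :=
  (-1 : ℝ) ^ k / ((Nat.factorial k : ℝ) * (Nat.factorial (n - k) : ℝ)) *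
    (Real.Gamma (n + α + 1) / Real.Gamma (k + α + 1))

lemma lagPoly_eq_sum (n : ℕ) (x : ℝ) :
    lagPoly α n x = ∑ k ∈ range (n + 1), lagCoeff α n k * x ^ k := rfl

lemma weight_mul_pow_mul_lagPoly (k m : ℕ) (x : ℝ) :
    x ^ α * Real.exp (-x) * (x ^ k * lagPoly α m x) =
      ∑ l ∈ range (m + 1), lagCoeff α m l * (x ^ α * Real.exp (-x) * x ^ (k + l)) := by
  simp only [lagPoly_eq_sum, mul_sum, pow_add]
  exact sum_congr rfl fun l _ => by ring

lemma integrableOn_weight_mul_pow_mul_lagPoly (hα : -1 < α) (k m : ℕ) :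
    IntegrableOn (fun x : ℝ => x ^ α * Real.exp (-x) * (x ^ k * lagPoly α m x)) (Ioi 0) := by
  simp only [weight_mul_pow_mul_lagPoly]
  exact integrable_finsetSum _ fun l _ => (integrableOn_weight_mul_pow hα _).const_mul _

lemma lagCoeff_self (hα : -1 < α) (n : ℕ) : lagCoeff α n n = (-1) ^ n / n ! := by
  simp [lagCoeff, (Real.Gamma_pos_of_pos (natCast_add_add_one_pos hα n)).ne']

lemma integral_weight_mul_pow_mul_lagPoly (hα : -1 < α) {k m : ℕ} (hkm : k ≤ m) :
    ∫ x in Ioi (0 : ℝ), x ^ α * Real.exp (-x) * (x ^ k * lagPoly α m x) =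
      if k = m then (-1) ^ m * Real.Gamma (m + α + 1) else 0 := by
  simp only [weight_mul_pow_mul_lagPoly]
  rw [integral_finsetSum _ fun l _ => (integrableOn_weight_mul_pow hα _).const_mul _]
  simp only [integral_const_mul, integral_weight_mul_pow hα]
  -- `Γ(l + α + 1 + k) / Γ(l + α + 1)` is a monic polynomial of degree `k` in `l`
  set Q : ℝ[X] := (ascPochhammer ℝ k).comp (X + C (α + 1))
  have hQ : Q.Monic ∧ Q.natDegree = k := by
    have hX : (X + C (α + 1)).natDegree = 1 := natDegree_X_add_C _
    exact ⟨(monic_ascPochhammer ℝ k).comp (monic_X_add_C _) (by rw [hX]; exact one_ne_zero),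
      by rw [natDegree_comp, hX, ascPochhammer_natDegree, mul_one]⟩
  have hterm : ∀ l ∈ range (m + 1), lagCoeff α m l * Real.Gamma ((k + l : ℕ) + α + 1) =
      Real.Gamma (m + α + 1) / m ! * ((-1) ^ l * m.choose l * Q.eval (l : ℝ)) := by
    intro l hl
    have hlm : l ≤ m := Nat.lt_succ_iff.mp (mem_range.mp hl)
    have hpos := natCast_add_add_one_pos hα l
    have hΓ : Real.Gamma ((k + l : ℕ) + α + 1) =
        Real.Gamma (l + α + 1) * (ascPochhammer ℝ k).eval ((l : ℝ) + α + 1) := by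
      rw [← Real.Gamma_add_nat_eq_mul_ascPochhammer hpos]; push_cast; ring_nf
    rw [hΓ, Nat.cast_choose ℝ hlm]
    simp only [Q, eval_comp, eval_add, eval_X, eval_C, lagCoeff, ← add_assoc]
    field_simp
  rw [sum_congr rfl hterm, ← mul_sum, sum_neg_one_pow_mul_choose_mul_eval]
  rcases hkm.eq_or_lt with rfl | hlt
  · rw [← hQ.2, fwdDiff_iter_degree_eq_factorial, hQ.1.leadingCoeff, hQ.2, if_pos rfl]
    simp only [Pi.smul_apply, Pi.natCast_apply, one_smul]
    field_simp
  · rw [fwdDiff_iter_eq_zero_of_degree_lt (hQ.2.trans_lt hlt), if_neg hlt.ne]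
    simp

lemma weight_mul_lagPoly_mul_lagPoly (n m : ℕ) (x : ℝ) :
    x ^ α * Real.exp (-x) * (lagPoly α n x * lagPoly α m x) =
      ∑ k ∈ range (n + 1), lagCoeff α n k * (x ^ α * Real.exp (-x) * (x ^ k * lagPoly α m x)) := by
  rw [lagPoly_eq_sum n x, sum_mul, mul_sum]
  exact sum_congr rfl fun k _ => by ring

lemma integrableOn_weight_mul_lagPoly_mul_lagPoly (hα : -1 < α) (n m : ℕ) :
    IntegrableOn (fun x : ℝ => x ^ α * Real.exp (-x) * (lagPoly α n x * lagPoly α m x))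
      (Ioi 0) := by
  simp only [weight_mul_lagPoly_mul_lagPoly]
  exact integrable_finsetSum _ fun k _ =>
    (integrableOn_weight_mul_pow_mul_lagPoly hα k m).const_mul _

lemma integral_weight_mul_lagPoly_mul_lagPoly (hα : -1 < α) {n m : ℕ} (hnm : n ≤ m) :
    ∫ x in Ioi (0 : ℝ), x ^ α * Real.exp (-x) * (lagPoly α n x * lagPoly α m x) =
      if n = m then Real.Gamma (n + α + 1) / n ! else 0 := by
  simp only [weight_mul_lagPoly_mul_lagPoly]
  rw [integral_finsetSum _ fun k _ => (integrableOn_weight_mul_pow_mul_lagPoly hα k m).const_mul _]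
  simp only [integral_const_mul]
  rw [sum_congr rfl fun k hk => by
    rw [integral_weight_mul_pow_mul_lagPoly hα ((Nat.lt_succ_iff.mp (mem_range.mp hk)).trans hnm)]]
  simp only [mul_ite, mul_zero, sum_ite_eq', Finset.mem_range, Nat.lt_succ_iff]
  rcases hnm.eq_or_lt with rfl | hlt
  · rw [if_pos le_rfl, if_pos rfl, lagCoeff_self hα]
    field_simp
    rw [← pow_mul, mul_comm n, pow_mul]; norm_num
  · rw [if_neg hlt.not_ge, if_neg hlt.ne]

lemma weight_mul_lagFun_mul_lagFun (n m : ℕ) (x : ℝ) :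
    x ^ α * Real.exp (-x) * (lagFun α n x * lagFun α m x) =
      Real.sqrt (n ! / Real.Gamma (α + n + 1)) * Real.sqrt (m ! / Real.Gamma (α + m + 1)) *
        (x ^ α * Real.exp (-x) * (lagPoly α n x * lagPoly α m x)) := by
  simp only [lagFun]; ring

lemma integrableOn_weight_mul_lagFun_mul_lagFun (hα : -1 < α) (n m : ℕ) :
    IntegrableOn (fun x : ℝ => x ^ α * Real.exp (-x) * (lagFun α n x * lagFun α m x))
      (Ioi 0) := by
  simp only [weight_mul_lagFun_mul_lagFun]
  exact (integrableOn_weight_mul_lagPoly_mul_lagPoly hα n m).const_mul _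

lemma integral_weight_mul_lagFun_mul_lagFun (hα : -1 < α) (n m : ℕ) :
    ∫ x in Ioi (0 : ℝ), x ^ α * Real.exp (-x) * (lagFun α n x * lagFun α m x) =
      if n = m then 1 else 0 := by
  wlog hnm : n ≤ m generalizing n m
  · simp only [mul_comm (lagFun α n _)]
    rw [this m n (le_of_not_ge hnm)]
    simp only [eq_comm]
  simp only [weight_mul_lagFun_mul_lagFun]
  rw [integral_const_mul, integral_weight_mul_lagPoly_mul_lagPoly hα hnm]
  split_ifs with h
  · subst h
    have hΓ := Real.Gamma_pos_of_pos (natCast_add_add_one_pos hα n)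
    rw [add_comm α, Real.mul_self_sqrt (by positivity)]
    field_simp
  · rw [mul_zero]

end Laguerre

lemma Quaternion.star_mul_mul_of_norm_eq_one {u : ℍ[ℝ]} (hu : ‖u‖ = 1) (a b : ℍ[ℝ]) :
    star (u * a) * (u * b) = star a * b := by
  rw [star_mul, mul_assoc, ← mul_assoc (star u), Quaternion.star_mul_self,
    Quaternion.normSq_eq_norm_mul_self, hu, mul_one, Quaternion.coe_one, one_mul]

theorem integral_smul_star_sum_mul_sum {X ι : Type*} [MeasurableSpace X] [DecidableEq ι]
    (μ : Measure X) (w : X → ℝ) (e : ι → X → ℝ) (s : Finset ι) (a b : ι → ℍ[ℝ])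
    (hint : ∀ n ∈ s, ∀ m ∈ s, Integrable (fun x => w x * (e n x * e m x)) μ)
    (horth : ∀ n ∈ s, ∀ m ∈ s, ∫ x, w x * (e n x * e m x) ∂μ = if n = m then 1 else 0) :
    ∫ x, w x • (star (∑ n ∈ s, (e n x : ℍ[ℝ]) * a n) * ∑ m ∈ s, (e m x : ℍ[ℝ]) * b m) ∂μ =
      ∑ n ∈ s, star (a n) * b n := by
  have hexp : ∀ x, w x • (star (∑ n ∈ s, (e n x : ℍ[ℝ]) * a n) * ∑ m ∈ s, (e m x : ℍ[ℝ]) * b m) =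
      ∑ n ∈ s, ∑ m ∈ s, (w x * (e n x * e m x)) • (star (a n) * b m) := by
    intro x
    simp only [star_sum, sum_mul_sum, smul_sum, Quaternion.coe_mul_eq_smul, Quaternion.star_smul,
      smul_mul_smul, smul_smul]
  simp only [hexp]
  rw [integral_finsetSum _ fun n hn =>
    integrable_finsetSum _ fun m hm => (hint n hn m hm).smul_const _]
  refine sum_congr rfl fun n hn => ?_
  rw [integral_finsetSum _ fun m hm => (hint n hn m hm).smul_const _,
    sum_congr rfl fun m hm => by rw [integral_smul_const, horth n hn m hm]]
  simp [ite_smul, hn]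

/-- the fractional transform with `‖θ‖ = 1` preserves the
quaternionic scalar product of finite Laguerre expansions. -/
theorem stmt3 (α : ℝ) (hα : 0 < α) (θ : ℍ[ℝ]) (hθ : ‖θ‖ = 1) (N : ℕ)
    (c d : ℕ → ℍ[ℝ]) (f h gf gh : ℝ → ℍ[ℝ])
    (hf : ∀ x, f x = ∑ n ∈ Finset.range (N + 1), (lagFun α n x : ℍ[ℝ]) * c n)
    (hh : ∀ x, h x = ∑ n ∈ Finset.range (N + 1), (lagFun α n x : ℍ[ℝ]) * d n)
    (hgf : ∀ x, gf x = ∑ n ∈ Finset.range (N + 1), (lagFun α n x : ℍ[ℝ]) * θ ^ n * c n)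
    (hgh : ∀ x, gh x = ∑ n ∈ Finset.range (N + 1), (lagFun α n x : ℍ[ℝ]) * θ ^ n * d n) :
    ∫ x in Ioi (0 : ℝ), (x ^ α * Real.exp (-x)) • (star (gf x) * gh x) =
      ∫ x in Ioi (0 : ℝ), (x ^ α * Real.exp (-x)) • (star (f x) * h x) := by
  have hα' : -1 < α := by linarith
  have hint := fun n (_ : n ∈ range (N + 1)) m (_ : m ∈ range (N + 1)) =>
    integrableOn_weight_mul_lagFun_mul_lagFun hα' n m
  have horth := fun n (_ : n ∈ range (N + 1)) m (_ : m ∈ range (N + 1)) =>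
    integral_weight_mul_lagFun_mul_lagFun hα' n m
  simp only [hf, hh, hgf, hgh, mul_assoc]
  rw [integral_smul_star_sum_mul_sum _ _ _ _ _ _ hint horth,
    integral_smul_star_sum_mul_sum _ _ _ _ _ _ hint horth]
  exact sum_congr rfl fun n _ =>
    Quaternion.star_mul_mul_of_norm_eq_one (by rw [norm_pow, hθ, one_pow]) _ _
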